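/- Define the formal power series in z (over the polynomial ring in p_1,\u2026,p_m,q_1,\u2026,q_m) G(z) = z / K^{\u27e8-1\u27e9}(z) where K(z) = z \u220f_{i=1}^m (1 - (q_i + s_{i+1})z) / \u220f_{i=1}^m (1 - (q_i + s_i)z) with s_i = p_i + p_{i+1} + \u22ef + p_m (s_{m+1}=0), and R(z) = z / L^{\u27e8-1\u27e9}(z) where L(z) = z \u220f_{i=1}^m (1 - (q_i - r_i)z) / [(1 + r_m z) \u220f_{i=1}^m (1 - (q_i - r_{i-1})z)] with r_i = p_1 + \u22ef + p_i. Then R(z) = G(z) - (p_1 + \u22ef + p_m) z; i.e., the two series agree in every coefficient except the coefficient of z. -/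

import Mathlib

/-- The field `ℚ(p_1,…,p_m,q_1,…,q_m)`. -/
abbrev FF (m : ℕ) : Type := FractionRing (MvPolynomial (Fin m ⊕ Fin m) ℚ)

noncomputable def pvar {m : ℕ} (i : Fin m) : FF m :=
  algebraMap (MvPolynomial (Fin m ⊕ Fin m) ℚ) _ (MvPolynomial.X (Sum.inl i))
noncomputable def qvar {m : ℕ} (i : Fin m) : FF m :=
  algebraMap (MvPolynomial (Fin m ⊕ Fin m) ℚ) _ (MvPolynomial.X (Sum.inr i))

/-- `r_i = p_1 + ⋯ + p_i` (`r_0 = 0`). -/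
noncomputable def rsum {m : ℕ} (i : ℕ) : FF m :=
  ∑ j : Fin m, if (j : ℕ) < i then pvar j else 0

/-- `s_i = p_i + p_{i+1} + ⋯ + p_m`, 0-indexed: `ssum i = p_{i+1} + ⋯ + p_m`
in 1-based notation, so the 1-based `s_i` is `ssum (i-1)` and `s_{m+1} = ssum m = 0`. -/
noncomputable def ssum {m : ℕ} (i : ℕ) : FF m :=
  ∑ j : Fin m, if i ≤ (j : ℕ) then pvar j else 0

/-- The geometric series `1/(1 - a z)`. -/
noncomputable def geom {A : Type*} [CommRing A] (a : A) : PowerSeries A :=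
  PowerSeries.mk fun n => a ^ n

/-- Composition `f(g)` of formal power series (for `g` with zero constant term). -/
noncomputable def pscomp {A : Type*} [CommRing A] (f g : PowerSeries A) : PowerSeries A :=
  PowerSeries.mk fun n =>
    ∑ j ∈ Finset.range (n + 1), PowerSeries.coeff j f * PowerSeries.coeff n (g ^ j)

/-- `K(z) = z ∏_{i=1}^m (1 - (q_i + s_{i+1})z) / ∏_{i=1}^m (1 - (q_i + s_i)z)`,
expanded as a formal power series (0-indexed: `s_{i+1} ↦ ssum (i+1)`, `s_i ↦ ssum i`). -/
noncomputable def K14 (m : ℕ) : PowerSeries (FF m) :=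
  PowerSeries.X *
    (∏ i : Fin m, (1 - PowerSeries.C (qvar i + ssum ((i : ℕ) + 1)) * PowerSeries.X)) *
    ∏ i : Fin m, geom (qvar i + ssum (i : ℕ))

/-- `L(z) = z ∏_{i=1}^m (1 - (q_i - r_i)z) / [(1 + r_m z) ∏_{i=1}^m (1 - (q_i - r_{i-1})z)]`,
expanded as a formal power series (0-indexed: `r_i ↦ rsum (i+1)`, `r_{i-1} ↦ rsum i`). -/
noncomputable def L14 (m : ℕ) : PowerSeries (FF m) :=
  PowerSeries.X *
    (∏ i : Fin m, (1 - PowerSeries.C (qvar i - rsum ((i : ℕ) + 1)) * PowerSeries.X)) *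
    geom (-(rsum (m := m) m)) *
    ∏ i : Fin m, geom (qvar i - rsum (i : ℕ))

/-!
Substituting the Möbius map `μ(z) = z / (1 - r z)`, with `r = r_m = p_1 + ⋯ + p_m`, turns each
factor `1 - a z` into `(1 - (a + r) z) / (1 - r z)`, i.e. it shifts every root and pole by `r`.
Since `r_m - r_i = s_{i+1}`, this carries the parameters of `L` to those of `K`, while the factor
`1 + r_m z` becomes `1 / (1 - r z)` and balances the powers of `1 - r z`: thus `L ∘ μ = K`. Hence
`L⁻¹ = μ ∘ K⁻¹ = K⁻¹ / (1 - r K⁻¹)`, and `R = z / L⁻¹ = z / K⁻¹ - r z = G - r z`.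
-/

open PowerSeries

section

variable {A : Type*} [CommRing A]

theorem pscomp_eq_subst (f : A⟦X⟧) {g : A⟦X⟧} (hg : constantCoeff g = 0) :
    pscomp f g = f.subst g := by
  ext n
  rw [pscomp, coeff_mk, coeff_subst' (HasSubst.of_constantCoeff_zero' hg)]
  refine (finsum_eq_sum_of_support_subset _ fun d hd => ?_).symm
  rw [Finset.coe_range, Set.mem_Iio, Nat.lt_succ_iff]
  by_contra! hnd
  apply Function.mem_support.mp hd
  simp only [X_pow_dvd_iff.mp (pow_dvd_pow_of_dvd (X_dvd_iff.mpr hg) d) n hnd, mul_zero]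

theorem eq_substInvOfIsUnit_of_subst_eq_X {P a : A⟦X⟧} (hP : constantCoeff P = 0)
    (hP₁ : IsUnit (coeff 1 P)) (ha : constantCoeff a = 0) (hPa : P.subst a = (X : A⟦X⟧)) :
    a = P.substInvOfIsUnit hP₁ := by
  have has : HasSubst a := HasSubst.of_constantCoeff_zero' ha
  have h := subst_comp_subst_apply (R := A) (HasSubst.of_constantCoeff_zero' hP) has
    (P.substInvOfIsUnit hP₁)
  rwa [subst_substInvOfIsUnit_left _ hP, subst_X has, hPa, X_subst] at h

theorem one_sub_C_mul_X_mul_geom (a : A) : (1 - C a * X) * geom a = 1 := by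
  have hgeom : geom a = rescale a (mk 1) := by simp [geom, rescale_mk]
  rw [hgeom, ← rescale_X, ← map_one (rescale a), ← map_sub, ← map_mul, mul_comm,
    mk_one_mul_one_sub_eq_one, map_one]

theorem geom_zero : geom (0 : A) = 1 := by
  simpa using one_sub_C_mul_X_mul_geom (0 : A)

theorem subst_one_sub_C_mul_X {g : A⟦X⟧} (hg : HasSubst g) (c : A) :
    (1 - C c * X : A⟦X⟧).subst g = 1 - C c * g := by
  rw [← coe_substAlgHom (R := A) hg, map_sub, map_one, map_mul, substAlgHom_X, C_eq_algebraMap,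
    AlgHom.commutes]

theorem one_sub_C_mul_mul_subst_geom {g : A⟦X⟧} (hg : HasSubst g) (a : A) :
    (1 - C a * g) * (geom a).subst g = 1 := by
  rw [← subst_one_sub_C_mul_X hg, ← subst_mul hg, one_sub_C_mul_X_mul_geom,
    ← coe_substAlgHom (R := A) hg, map_one]

noncomputable def mobius (r : A) : A⟦X⟧ := X * geom r

theorem hasSubst_mobius (r : A) : HasSubst (mobius r) :=
  HasSubst.of_constantCoeff_zero' (by simp [mobius])

theorem one_sub_C_mul_mobius (r c : A) :
    1 - C c * mobius r = (1 - C (c + r) * X) * geom r := by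
  rw [mobius, map_add]
  linear_combination (-1 : A⟦X⟧) * one_sub_C_mul_X_mul_geom r

theorem subst_mobius_one_sub_C_mul_X (r c : A) :
    (1 - C c * X : A⟦X⟧).subst (mobius r) = (1 - C (c + r) * X) * geom r := by
  rw [subst_one_sub_C_mul_X (hasSubst_mobius r), one_sub_C_mul_mobius]

theorem subst_mobius_geom (r c : A) :
    (geom c).subst (mobius r) = (1 - C r * X) * geom (c + r) := by
  have h := one_sub_C_mul_mul_subst_geom (hasSubst_mobius r) c
  rw [one_sub_C_mul_mobius] at h
  refine left_inv_eq_right_inv (by rwa [mul_comm]) ?_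
  linear_combination (1 - C r * X) * geom r * one_sub_C_mul_X_mul_geom (c + r) +
    one_sub_C_mul_X_mul_geom r

end

theorem ssum_eq_rsum_sub (m k : ℕ) : ssum (m := m) k = rsum m - rsum k := by
  rw [rsum, rsum, ssum, ← Finset.sum_sub_distrib]
  refine Finset.sum_congr rfl fun j _ => ?_
  by_cases h : (j : ℕ) < k
  · rw [if_pos j.isLt, if_pos h, if_neg (by omega), sub_self]
  · rw [if_pos j.isLt, if_neg h, if_pos (by omega), sub_zero]

theorem rsum_self (m : ℕ) : rsum (m := m) m = ∑ j : Fin m, pvar j :=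
  Finset.sum_congr rfl fun j _ => if_pos j.isLt

theorem constantCoeff_L14 (m : ℕ) : constantCoeff (L14 m) = 0 := by
  simp [L14]

theorem coeff_one_L14 (m : ℕ) : coeff 1 (L14 m) = 1 := by
  simp [L14, mul_assoc, coeff_succ_X_mul, geom]

theorem subst_mobius_L14 (m : ℕ) : (L14 m).subst (mobius (rsum (m := m) m)) = K14 m := by
  rw [L14]
  set r := rsum (m := m) m
  have hshift (k : ℕ) (i : Fin m) : qvar i - rsum k + r = qvar i + ssum k := by
    rw [ssum_eq_rsum_sub]; ring
  rw [← coe_substAlgHom (R := FF m) (hasSubst_mobius r)]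
  simp only [map_mul, map_prod, coe_substAlgHom, subst_X (hasSubst_mobius r),
    subst_mobius_one_sub_C_mul_X, subst_mobius_geom, hshift, neg_add_cancel, geom_zero]
  rw [K14, mobius, Finset.prod_mul_distrib, Finset.prod_mul_distrib, Finset.prod_const,
    Finset.prod_const, Finset.card_univ, Fintype.card_fin]
  set P := ∏ i : Fin m, (1 - C (qvar i + ssum ((i : ℕ) + 1)) * X)
  set Q := ∏ i : Fin m, geom (qvar i + ssum (i : ℕ))
  have hunit := one_sub_C_mul_X_mul_geom r
  set t := 1 - C r * X
  calc X * geom r * (P * geom r ^ m) * (t * 1) * (t ^ m * Q)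
      = X * P * Q * (t ^ (m + 1) * geom r ^ (m + 1)) := by ring
    _ = X * P * Q := by rw [← mul_pow, hunit, one_pow, mul_one]

/-- With `G(z) = z / K⟨-1⟩(z)` and `R(z) = z / L⟨-1⟩(z)`
(the compositional inverses and the quotients being encoded by the hypotheses),
`R(z) = G(z) - (p_1 + ⋯ + p_m) z`. -/
theorem top_degree_series_agree (m : ℕ)
    (Kinv Linv G R : PowerSeries (FF m))
    (hK0 : PowerSeries.constantCoeff Kinv = 0)
    (hL0 : PowerSeries.constantCoeff Linv = 0)
    (hKinv : pscomp (K14 m) Kinv = PowerSeries.X)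
    (hLinv : pscomp (L14 m) Linv = PowerSeries.X)
    (hG : G * Kinv = PowerSeries.X)
    (hR : R * Linv = PowerSeries.X) :
    R = G - PowerSeries.C (∑ j : Fin m, pvar j) * PowerSeries.X := by
  have hK : HasSubst Kinv := HasSubst.of_constantCoeff_zero' hK0
  rw [← rsum_self]
  set r := rsum (m := m) m
  set S : (FF m)⟦X⟧ := (geom r).subst Kinv
  have hS : (1 - C r * Kinv) * S = 1 := one_sub_C_mul_mul_subst_geom hK r
  have hv : (mobius r).subst Kinv = Kinv * S := by rw [mobius, subst_mul hK, subst_X hK]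
  have hv0 : constantCoeff (Kinv * S) = 0 := by rw [map_mul, hK0, zero_mul]
  have hLv : (L14 m).subst (Kinv * S) = X := by
    rw [← hv, ← subst_comp_subst_apply (hasSubst_mobius r) hK, subst_mobius_L14,
      ← pscomp_eq_subst _ hK0, hKinv]
  have hunit : IsUnit (coeff 1 (L14 m)) := by rw [coeff_one_L14]; exact isUnit_one
  have hLinv_eq : Linv = Kinv * S :=
    (eq_substInvOfIsUnit_of_subst_eq_X (constantCoeff_L14 m) hunit hL0
      (by rw [← pscomp_eq_subst _ hL0, hLinv])).trans
    (eq_substInvOfIsUnit_of_subst_eq_X (constantCoeff_L14 m) hunit hv0 hLv).symm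
  have hKinv_ne : Kinv ≠ 0 := by
    rintro rfl
    exact X_ne_zero (by rw [← hG, mul_zero])
  have hRS : R * S = G :=
    mul_right_cancel₀ hKinv_ne (by rw [hLinv_eq] at hR; linear_combination hR - hG)
  linear_combination (1 - C r * Kinv) * hRS - C r * hG - R * hS
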